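/- Assume the Gauss periods η_a, 0 ≤ a ≤ N−1, take exactly three rational values α₁, α₂, α₃ forming an arithmetic progression with α₁ − α₂ = −t < 0 and α₃ − α₂ = t > 0. Then the group-ring element I₁ − I₃ generates a circulant weighing matrix CW(N, q/t²), i.e. (I₁ − I₃)(I₁ − I₃)^{(−1)} = (q/t²)·1 in ℚ[Z_N], if and only if q is a square and α₂ = (√q − 1)/N. -/

import Mathlib

/-!
Write `q - 1 = N * M`, so that `η a = ∑_{j < M} ψ (γ ^ (a + N j))`. Multiplying two periods
and summing over `a` turns the double sum into sums of `ψ` over `F^*`, which gives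
`∑ η a = -1` and `∑_a η a η (a + g) = q · [γ ^ g ∈ -C₀] - M`. If `γ ^ i = -1` then
`η (a + i) = conj (η a)`; for rational periods this makes `η` periodic of period `i mod N`,
and comparing the correlations at `0` and at `i mod N` forces `-1 ∈ C₀`, i.e. the correlation
is `q · δ_g - M`.

Writing `η = α₂ - t e` with `e` the indicator of `I₁` minus that of `I₃`, this correlation
becomes `t² ∑_a e a e (a - g) = (N α₂² + 2 α₂ - M) + q · δ_g`, so `I₁ - I₃` is a
`CW(N, q/t²)` iff `(N α₂ + 1)² = q`. As `α₂` is a rational algebraic integer,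
`N α₂ + 1 = ±√q`. The minus sign is impossible: then `√q = p ^ s`, `α₂ = -b` with
`N b = √q + 1`, and each period splits into `b` sums of `ψ` over the nonzero elements of the
subfield `F_{√q}`, each equal to `-1` or `√q - 1`. Hence every period is at least `-b = α₂`,
contradicting `α₁ < α₂`.
-/

open Finset ComplexConjugate
open Polynomial (nthRootsFinset mem_nthRootsFinset)

theorem Function.Periodic.sum_range_add {M : Type*} [AddCancelCommMonoid M] {f : ℕ → M}
    {n : ℕ} (hf : Function.Periodic f n) (j : ℕ) :
    ∑ k ∈ range n, f (j + k) = ∑ k ∈ range n, f k := by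
  induction j with
  | zero => simp
  | succ j ih =>
    rw [← ih, ← add_left_inj (f j)]
    calc ∑ k ∈ range n, f (j + 1 + k) + f j = ∑ k ∈ range (n + 1), f (j + k) := by
          rw [sum_range_succ']; simp_rw [add_right_comm j 1, add_assoc]; simp
      _ = ∑ k ∈ range n, f (j + k) + f j := by rw [sum_range_succ, hf]

theorem Finset.sum_range_mul_eq_sum_sum {M : Type*} [AddCommMonoid M] (B C : ℕ) (f : ℕ → M) :
    ∑ i ∈ range (B * C), f i = ∑ a ∈ range B, ∑ j ∈ range C, f (a + B * j) := by
  simp only [← Fin.sum_univ_eq_sum_range]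
  rw [sum_comm, ← Fintype.sum_prod_type', mul_comm B C]
  exact (Fintype.sum_equiv finProdFinEquiv _ _ fun x => by simp).symm

theorem ZMod.sum_val_eq_sum_range {M : Type*} [AddCommMonoid M] (n : ℕ) [NeZero n]
    (f : ℕ → M) : ∑ x : ZMod n, f x.val = ∑ i ∈ range n, f i := by
  obtain ⟨k, rfl⟩ := Nat.exists_eq_succ_of_ne_zero (NeZero.ne n)
  exact Fin.sum_univ_eq_sum_range f _

theorem Int.natCast_mul_add_one_sq_cases {N q : ℕ} {z : ℤ} (h : (N * z + 1) ^ 2 = q) :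
    (∃ m : ℕ, q = m ^ 2 ∧ N * z + 1 = m) ∨
      ∃ m b : ℕ, q = m ^ 2 ∧ N * b = m + 1 ∧ z = -b := by
  have hq : q = (N * z + 1).natAbs ^ 2 := by zify; rw [sq_abs, h]
  rcases le_or_gt 0 (N * z + 1) with h0 | h0
  · exact Or.inl ⟨_, hq, (Int.natAbs_of_nonneg h0).symm⟩
  · have hz : z < 0 := by
      by_contra! hz
      nlinarith [Int.natCast_nonneg N]
    refine Or.inr ⟨_, z.natAbs, hq, ?_, by omega⟩
    zify
    rw [abs_of_neg h0, abs_of_neg hz]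
    ring

theorem IsPrimitiveRoot.sum_range_pow {R M : Type*} [CommRing R] [IsDomain R] [AddCommMonoid M]
    {ω : R} {n : ℕ} (hω : IsPrimitiveRoot ω n) (φ : R → M) :
    ∑ k ∈ range n, φ (ω ^ k) = ∑ y ∈ nthRootsFinset n (1 : R), φ y := by
  rcases Nat.eq_zero_or_pos n with rfl | hn
  · simp
  have : NeZero n := ⟨hn.ne'⟩
  have hmem (y : R) : y ∈ nthRootsFinset n (1 : R) ↔ y ^ n = 1 :=
    Polynomial.mem_nthRootsFinset hn 1
  refine sum_nbij (ω ^ ·) (fun k _ => (hmem _).2 ?_)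
    (fun i hi j hj h => hω.pow_inj (mem_range.1 hi) (mem_range.1 hj) h) (fun y hy => ?_)
    (fun _ _ => rfl)
  · rw [← pow_mul, mul_comm, pow_mul, hω.pow_eq_one, one_pow]
  · obtain ⟨k, hk, rfl⟩ := hω.eq_pow_of_pow_eq_one ((hmem y).1 hy)
    exact ⟨k, mem_range.2 hk, rfl⟩

theorem FiniteField.nthRootsFinset_card_sub_one {F : Type*} [Field F] [Fintype F]
    [DecidableEq F] : nthRootsFinset (Fintype.card F - 1) (1 : F) = univ.erase 0 := by
  have hpos : 0 < Fintype.card F - 1 := Nat.sub_pos_of_lt Fintype.one_lt_card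
  ext x
  rw [mem_nthRootsFinset hpos, mem_erase]
  refine ⟨fun h => ⟨?_, mem_univ x⟩, fun h => FiniteField.pow_card_sub_one_eq_one x h.1⟩
  rintro rfl
  rw [zero_pow hpos.ne'] at h
  exact zero_ne_one h

namespace AddChar

theorem isIntegral_apply {A B : Type*} [AddGroup A] [Fintype A] [CommRing B]
    (ψ : AddChar A B) (x : A) : IsIntegral ℤ (ψ x) :=
  IsIntegral.of_pow Fintype.card_pos <| by
    rw [← map_nsmul_eq_pow, card_nsmul_eq_zero, map_zero_eq_one]
    exact isIntegral_one

variable {F R : Type*} [Field F] [Fintype F] [DecidableEq F] [CommRing R] [IsDomain R]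

theorem sum_erase_zero_mul {ψ : AddChar F R} (hψ : ψ ≠ 1) (c : F) :
    ∑ x ∈ univ.erase 0, ψ (x * c) = if c = 0 then (Fintype.card F : R) - 1 else -1 := by
  have h := add_sum_erase univ (fun x => ψ (x * c)) (mem_univ 0)
  rw [sum_mulShift c (IsPrimitive.of_ne_one hψ), zero_mul, map_zero_eq_one] at h
  split_ifs at h ⊢ <;> push_cast at h <;> linear_combination h

theorem exists_sum_nthRootsFinset_mul_eq {p : ℕ} [Fact p.Prime] [CharP F p] (ψ : AddChar F R)
    {s : ℕ} (hs : s ≠ 0) (β : F) :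
    ∃ n : ℕ, ∑ y ∈ nthRootsFinset (p ^ s - 1) (1 : F), ψ (β * y) = n - 1 := by
  classical
  have hp : 1 < p ^ s := Nat.one_lt_pow hs (Fact.out : p.Prime).one_lt
  have hm : 0 < p ^ s - 1 := Nat.sub_pos_of_lt hp
  -- `K` is the fixed set of `y ↦ y ^ p ^ s`, an additive subgroup whose nonzero elements are the
  -- `(p ^ s - 1)`-th roots of unity; `ψ (β * ·)` restricts to a character of `K`.
  set K : AddSubgroup F := ((iterateFrobenius F p s).toAddMonoidHom - AddMonoidHom.id F).ker
  have hK (y : F) : y ∈ insert 0 (nthRootsFinset (p ^ s - 1) (1 : F)) ↔ y ∈ K := by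
    have hfix : y ^ p ^ s = y ↔ y = 0 ∨ y ^ (p ^ s - 1) = 1 := by
      rw [← mul_eq_mul_left_iff.trans or_comm, mul_one, ← pow_succ', Nat.sub_add_cancel hp.le]
    simp [K, iterateFrobenius_def, mem_nthRootsFinset hm, sub_eq_zero, hfix]
  have h0 : (0 : F) ∉ nthRootsFinset (p ^ s - 1) (1 : F) := by
    simp [mem_nthRootsFinset hm, zero_pow hm.ne']
  set χ : AddChar K R := ψ.compAddMonoidHom ((AddMonoidHom.mulLeft β).comp K.subtype)
  refine ⟨if χ = 0 then Fintype.card K else 0, ?_⟩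
  have h := (sum_subtype _ hK fun y => ψ (β * y)).trans χ.sum_eq_ite
  rw [sum_insert h0, mul_zero, map_zero_eq_one] at h
  split_ifs at h ⊢ <;> push_cast at h ⊢ <;> linear_combination h

end AddChar

noncomputable def traceChar (p : ℕ) [Fact p.Prime] (F : Type*) [Field F] [Algebra (ZMod p) F]
    {C : Type*} [CommMonoid C] {ζ : C} (hζ : ζ ^ p = 1) : AddChar F C :=
  (AddChar.zmodChar p hζ).compAddMonoidHom (Algebra.trace (ZMod p) F).toAddMonoidHom

section traceChar

variable {p : ℕ} [Fact p.Prime] {F : Type*} [Field F] [Algebra (ZMod p) F] {C : Type*}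
  [CommMonoid C] {ζ : C}

theorem traceChar_apply (hζ : ζ ^ p = 1) (x : F) :
    traceChar p F hζ x = ζ ^ (Algebra.trace (ZMod p) F x).val :=
  AddChar.zmodChar_apply hζ _

theorem traceChar_ne_one [Finite F] (hζ : IsPrimitiveRoot ζ p) :
    traceChar p F hζ.pow_eq_one ≠ 1 := by
  obtain ⟨b, hb⟩ := Algebra.trace_surjective (ZMod p) F 1
  intro h
  have := DFunLike.congr_fun h b
  rw [traceChar_apply, hb, ZMod.val_one, pow_one, AddChar.one_apply] at this
  exact hζ.ne_one (Fact.out : p.Prime).one_lt this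

end traceChar

noncomputable def gaussPeriod {F : Type*} [Field F] (ψ : AddChar F ℂ) (γ : F) (N M a : ℕ) :
    ℂ :=
  ∑ j ∈ range M, ψ (γ ^ (a + N * j))

section GaussPeriod

variable {F : Type*} [Field F] {ψ : AddChar F ℂ} {γ : F} {N M : ℕ}

variable (ψ) in
theorem gaussPeriod_periodic (hγ : γ ^ (N * M) = 1) :
    Function.Periodic (gaussPeriod ψ γ N M) N := by
  intro a
  have hf : Function.Periodic (fun j => ψ (γ ^ (a + N * j))) M := fun j => by
    simp only [mul_add, ← add_assoc, pow_add _ (a + N * j), hγ, mul_one]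
  simpa [gaussPeriod, mul_add, add_assoc, add_left_comm] using hf.sum_range_add 1

variable [Fintype F]

theorem gaussPeriod_add_of_pow_eq_neg_one {i : ℕ} (hi : γ ^ i = -1) (a : ℕ) :
    gaussPeriod ψ γ N M (a + i) = conj (gaussPeriod ψ γ N M a) := by
  rw [gaussPeriod, gaussPeriod, map_sum]
  refine sum_congr rfl fun j _ => ?_
  rw [← AddChar.map_neg_eq_conj, add_right_comm, pow_add, hi, mul_neg_one]

variable [DecidableEq F] (hγ : IsPrimitiveRoot γ (N * M)) (hF : Fintype.card F = N * M + 1)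
include hγ hF

theorem sum_range_sum_range_pow_eq_sum_erase_zero {β : Type*} [AddCommMonoid β] (φ : F → β) :
    ∑ a ∈ range N, ∑ j ∈ range M, φ (γ ^ (a + N * j)) = ∑ x ∈ univ.erase 0, φ x := by
  rw [← sum_range_mul_eq_sum_sum N M (fun i => φ (γ ^ i)), hγ.sum_range_pow,
    ← FiniteField.nthRootsFinset_card_sub_one, hF, Nat.add_sub_cancel]

theorem sum_gaussPeriod (hψ : ψ ≠ 1) : ∑ a ∈ range N, gaussPeriod ψ γ N M a = -1 := by
  simpa [gaussPeriod] using (sum_range_sum_range_pow_eq_sum_erase_zero hγ hF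
    fun x => ψ (x * 1)).trans (AddChar.sum_erase_zero_mul hψ 1)

theorem sum_gaussPeriod_mul_gaussPeriod_add (hψ : ψ ≠ 1) (g : ℕ) :
    ∑ a ∈ range N, gaussPeriod ψ γ N M a * gaussPeriod ψ γ N M (a + g) =
      ∑ d ∈ range M, if γ ^ (g + N * d) = -1 then (Fintype.card F : ℂ) - 1 else -1 := by
  have hprod (a : ℕ) : gaussPeriod ψ γ N M a * gaussPeriod ψ γ N M (a + g) =
      ∑ j ∈ range M, ∑ d ∈ range M, ψ (γ ^ (a + N * j) * (1 + γ ^ (g + N * d))) := by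
    rw [gaussPeriod, sum_mul]
    refine sum_congr rfl fun j _ => ?_
    -- reindex the second period by `k = j + d`, using that its terms are `M`-periodic in `k`
    have hf : Function.Periodic (fun k => ψ (γ ^ (a + g + N * k))) M := fun k => by
      simp only [mul_add, ← add_assoc, pow_add _ (a + g + N * k), hγ.pow_eq_one, mul_one]
    rw [gaussPeriod, ← hf.sum_range_add j, mul_sum]
    refine sum_congr rfl fun d _ => ?_
    rw [← AddChar.map_add_eq_mul, mul_one_add, ← pow_add]
    ring_nf
  simp_rw [hprod]
  rw [sum_congr rfl fun a _ => sum_comm, sum_comm]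
  refine sum_congr rfl fun d _ => ?_
  rw [sum_range_sum_range_pow_eq_sum_erase_zero hγ hF fun x => ψ (x * (1 + γ ^ (g + N * d))),
    AddChar.sum_erase_zero_mul hψ]
  simp only [add_eq_zero_iff_eq_neg']

theorem sum_gaussPeriod_mul_gaussPeriod_add_of_pow_eq_neg_one (hψ : ψ ≠ 1) {i : ℕ}
    (hi : γ ^ i = -1) (hiNM : i < N * M) {g : ℕ} (hg : g < N) :
    ∑ a ∈ range N, gaussPeriod ψ γ N M a * gaussPeriod ψ γ N M (a + g) =
      (if g = i % N then (Fintype.card F : ℂ) else 0) - M := by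
  have hcond (d : ℕ) (hd : d ∈ range M) :
      γ ^ (g + N * d) = -1 ↔ g = i % N ∧ d = i / N := by
    have hlt : g + N * d < N * M := by nlinarith [mem_range.1 hd]
    rw [← hi]
    refine ⟨fun h => ?_, fun ⟨hgi, hdi⟩ => by rw [hgi, hdi, Nat.mod_add_div]⟩
    obtain rfl := hγ.pow_inj hlt hiNM h
    simp [Nat.add_mul_mod_self_left, Nat.mod_eq_of_lt hg,
      Nat.add_mul_div_left _ _ (by omega : 0 < N), Nat.div_eq_of_lt hg]
  have hsplit (P : Prop) [Decidable P] : (if P then (Fintype.card F : ℂ) - 1 else -1) =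
      (if P then (Fintype.card F : ℂ) else 0) - 1 := by
    split_ifs <;> ring
  rw [sum_gaussPeriod_mul_gaussPeriod_add hγ hF hψ, sum_congr rfl fun d hd => by
    rw [if_congr (hcond d hd) rfl rfl, hsplit], sum_sub_distrib]
  by_cases hgi : g = i % N
  · simp [hgi, Nat.div_lt_of_lt_mul hiNM]
  · simp [hgi]

theorem sum_gaussPeriod_mul_gaussPeriod_add_of_real (hψ : ψ ≠ 1)
    (hreal : ∀ a, conj (gaussPeriod ψ γ N M a) = gaussPeriod ψ γ N M a) {g : ℕ}
    (hg : g < N) :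
    ∑ a ∈ range N, gaussPeriod ψ γ N M a * gaussPeriod ψ γ N M (a + g) =
      (if g = 0 then (Fintype.card F : ℂ) else 0) - M := by
  have hN : 0 < N := by omega
  have : NeZero (N * M) := ⟨by have := Fintype.one_lt_card (α := F); omega⟩
  obtain ⟨i, hiNM, hi⟩ := hγ.eq_pow_of_pow_eq_one (ξ := -1) <| by
    simpa [hF] using FiniteField.pow_card_sub_one_eq_one (-1 : F) (neg_ne_zero.2 one_ne_zero)
  have key {g : ℕ} (hg : g < N) :=
    sum_gaussPeriod_mul_gaussPeriod_add_of_pow_eq_neg_one hγ hF hψ hi hiNM hg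
  suffices i % N = 0 by simpa [this] using key hg
  by_contra hi0
  have hper := (gaussPeriod_periodic ψ hγ.pow_eq_one).map_mod_nat
  have hshift (a : ℕ) : gaussPeriod ψ γ N M (a + i % N) = gaussPeriod ψ γ N M (a + 0) := by
    rw [← hper, Nat.add_mod_mod, hper, gaussPeriod_add_of_pow_eq_neg_one hi, hreal, add_zero]
  have h := (key (Nat.mod_lt i hN)).symm.trans
    ((sum_congr rfl fun a _ => by rw [hshift]).trans (key hN))
  simp only [if_pos, if_neg (Ne.symm hi0), sub_left_inj, Nat.cast_eq_zero,
    Fintype.card_ne_zero] at h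

variable (ψ) in
theorem exists_gaussPeriod_eq_natCast_sub {p : ℕ} [Fact p.Prime] [CharP F p] {s b : ℕ}
    (hs : s ≠ 0) (hM : M = b * (p ^ s - 1)) (a : ℕ) :
    ∃ n : ℕ, gaussPeriod ψ γ N M a = n - b := by
  have hNM : 0 < N * M := by have := Fintype.one_lt_card (α := F); omega
  have hw : IsPrimitiveRoot (γ ^ (N * b)) (p ^ s - 1) := hγ.pow hNM (by rw [hM]; ring)
  have hsplit : gaussPeriod ψ γ N M a =
      ∑ i ∈ range b, ∑ y ∈ nthRootsFinset (p ^ s - 1) (1 : F),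
        ψ (γ ^ (a + N * i) * y) := by
    rw [gaussPeriod, hM, sum_range_mul_eq_sum_sum]
    refine sum_congr rfl fun i _ => ?_
    rw [← hw.sum_range_pow]
    refine sum_congr rfl fun k _ => ?_
    rw [← pow_mul, ← pow_add]
    ring_nf
  choose n hn using fun i => ψ.exists_sum_nthRootsFinset_mul_eq hs (γ ^ (a + N * i))
  refine ⟨∑ i ∈ range b, n i, ?_⟩
  rw [hsplit, sum_congr rfl fun i _ => hn i, sum_sub_distrib]
  simp

theorem sum_eq_neg_one_of_ratCast_eq_gaussPeriod [NeZero N] (hψ : ψ ≠ 1) {h : ZMod N → ℚ}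
    (hh : ∀ x, (h x : ℂ) = gaussPeriod ψ γ N M x.val) : ∑ x, h x = -1 := by
  have hC : ((∑ x, h x : ℚ) : ℂ) = ((-1 : ℚ) : ℂ) := by
    push_cast
    simp_rw [hh]
    rw [ZMod.sum_val_eq_sum_range N (gaussPeriod ψ γ N M), sum_gaussPeriod hγ hF hψ]
  exact_mod_cast hC

theorem sum_mul_add_eq_of_ratCast_eq_gaussPeriod [NeZero N] (hψ : ψ ≠ 1) {h : ZMod N → ℚ}
    (hh : ∀ x, (h x : ℂ) = gaussPeriod ψ γ N M x.val) (g : ZMod N) :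
    ∑ x, h x * h (x + g) = (if g = 0 then (Fintype.card F : ℚ) else 0) - M := by
  have hper := (gaussPeriod_periodic ψ hγ.pow_eq_one).map_mod_nat
  have hreal (a : ℕ) : conj (gaussPeriod ψ γ N M a) = gaussPeriod ψ γ N M a := by
    rw [← hper, ← ZMod.val_natCast, ← hh, map_ratCast]
  have hC : ((∑ x, h x * h (x + g) : ℚ) : ℂ) =
      (((if g = 0 then (Fintype.card F : ℚ) else 0) - M : ℚ) : ℂ) := by
    push_cast
    simp_rw [hh, ZMod.val_add, hper]
    rw [ZMod.sum_val_eq_sum_range N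
        (fun a => gaussPeriod ψ γ N M a * gaussPeriod ψ γ N M (a + g.val)),
      sum_gaussPeriod_mul_gaussPeriod_add_of_real hγ hF hψ hreal g.val_lt]
    simp [ZMod.val_eq_zero, apply_ite]
  exact_mod_cast hC

theorem natCast_mul_add_one_sq_eq_card_iff {p f : ℕ} [Fact p.Prime] [CharP F p]
    (hcard : Fintype.card F = p ^ f) {α β : ℚ} {a b : ℕ} (hα : gaussPeriod ψ γ N M a = α)
    (hβ : gaussPeriod ψ γ N M b = β) (hβα : β < α) :
    ((N : ℚ) * α + 1) ^ 2 = Fintype.card F ↔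
      ∃ m : ℕ, Fintype.card F = m ^ 2 ∧ α = ((m : ℚ) - 1) / N := by
  have hN : (N : ℚ) ≠ 0 := by
    have := Fintype.one_lt_card (α := F)
    exact Nat.cast_ne_zero.2 fun h => by simp [h] at hF; omega
  refine ⟨fun hsq => ?_, fun ⟨m, hm, hαm⟩ => by rw [hm, hαm]; field_simp; push_cast; ring⟩
  obtain ⟨z, rfl⟩ : ∃ z : ℤ, (z : ℚ) = α := by
    refine IsIntegrallyClosed.isIntegral_iff.1
      ((isIntegral_algebraMap_iff (algebraMap ℚ ℂ).injective).1 ?_)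
    rw [eq_ratCast, ← hα]
    exact IsIntegral.sum _ fun j _ => ψ.isIntegral_apply _
  rcases Int.natCast_mul_add_one_sq_cases (q := Fintype.card F) (by exact_mod_cast hsq) with
    ⟨m, hm, hzm⟩ | ⟨m, c, hm, hc, rfl⟩
  · refine ⟨m, hm, ?_⟩
    rw [eq_div_iff hN]
    linear_combination (by exact_mod_cast hzm : (N : ℚ) * z + 1 = m)
  · exfalso
    obtain ⟨s, -, rfl⟩ :=
      (Nat.dvd_prime_pow Fact.out).1 (hcard ▸ hm ▸ dvd_pow_self m two_ne_zero)
    have hs : s ≠ 0 := by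
      rintro rfl
      have := Fintype.one_lt_card (α := F)
      simp [hm] at this
    have hM : M = c * (p ^ s - 1) := by
      have h1 : 1 ≤ p ^ s := Nat.one_le_pow _ _ (Fact.out : p.Prime).pos
      have h2 : N * M + 1 = (p ^ s) ^ 2 := hF.symm.trans hm
      refine Nat.eq_of_mul_eq_mul_left (Nat.pos_of_ne_zero (by exact_mod_cast hN)) ?_
      rw [← mul_assoc, hc]
      zify [h1] at h2 ⊢
      linear_combination h2
    obtain ⟨n, hn⟩ := exists_gaussPeriod_eq_natCast_sub ψ hγ hF hs hM b
    have : β = n - c := by exact_mod_cast hβ.symm.trans hn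
    push_cast at hβα
    linarith [(n.cast_nonneg : (0 : ℚ) ≤ n)]

end GaussPeriod

section GroupRing

open AddMonoidAlgebra

variable {R G : Type*} [DecidableEq G]

theorem AddMonoidAlgebra.coeff_sum_single_one [Semiring R] (A : Finset G) (x : G) :
    (∑ a ∈ A, single a (1 : R)).coeff x = if x ∈ A then 1 else 0 := by
  simp [coeff_sum, Finsupp.single_apply]

theorem AddMonoidAlgebra.coeff_sum_single_neg_one [Semiring R] [AddGroup G] (A : Finset G)
    (x : G) : (∑ a ∈ A, single (-a) (1 : R)).coeff x = if -x ∈ A then 1 else 0 := by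
  simp [coeff_sum, Finsupp.single_apply, neg_eq_iff_eq_neg]

variable [Ring R]

variable (R) in
def indicatorDiff (A B : Finset G) (x : G) : R :=
  (if x ∈ A then 1 else 0) - (if x ∈ B then 1 else 0)

theorem ratCast_sub_mul_indicatorDiff_eq {A B : Finset G} (f : G → ℂ)
    {α₁ α₂ α₃ t : ℚ} (ht : 0 < t) (hα₁ : α₁ - α₂ = -t) (hα₃ : α₃ - α₂ = t)
    (hf : ∀ x, f x = α₁ ∨ f x = α₂ ∨ f x = α₃)
    (hA : ∀ x, x ∈ A ↔ f x = α₁) (hB : ∀ x, x ∈ B ↔ f x = α₃) (x : G) :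
    ((α₂ - t * indicatorDiff ℚ A B x : ℚ) : ℂ) = f x := by
  have h₁₂ : (α₁ : ℂ) ≠ α₂ := by norm_cast; linarith
  have h₁₃ : (α₁ : ℂ) ≠ α₃ := by norm_cast; linarith
  have h₂₃ : (α₂ : ℂ) ≠ α₃ := by norm_cast; linarith
  rcases hf x with h | h | h <;>
    simp [indicatorDiff, hA, hB, h, h₁₃, h₂₃, h₁₂.symm, h₁₃.symm] <;>
    norm_cast <;> linarith

variable [AddCommGroup G] [Fintype G]

theorem sub_mul_sub_eq_smul_one_iff (A B : Finset G) (c : R) :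
    ((∑ a ∈ A, single a (1 : R)) - ∑ a ∈ B, single a (1 : R)) *
        ((∑ a ∈ A, single (-a) (1 : R)) - ∑ a ∈ B, single (-a) (1 : R)) = c • 1 ↔
      ∀ x, ∑ a, indicatorDiff R A B a * indicatorDiff R A B (a - x) =
        if x = 0 then c else 0 := by
  rw [← AddMonoidAlgebra.coeff_inj, Finsupp.ext_iff]
  refine forall_congr' fun x => ?_
  rw [coeff_mul_apply_left, Finsupp.sum_fintype _ _ (by simp)]
  simp only [coeff_sub, Finsupp.coe_sub, Pi.sub_apply, coeff_sum_single_one,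
    coeff_sum_single_neg_one, coeff_smul, one_def, coeff_single, Finsupp.smul_apply,
    Finsupp.single_apply, smul_eq_mul, mul_ite, mul_one, mul_zero, neg_add_eq_sub, indicatorDiff]
  simp [eq_comm]

theorem sum_mul_sub_eq_ite_iff (e : G → ℚ) {α t q M : ℚ} (ht : t ≠ 0)
    (hq : q = Fintype.card G * M + 1) (hsum : ∑ x, (α - t * e x) = -1)
    (hcorr : ∀ g, ∑ x, (α - t * e x) * (α - t * e (x + g)) = (if g = 0 then q else 0) - M)
    {g₀ : G} (hg₀ : g₀ ≠ 0) :
    (∀ x, ∑ a, e a * e (a - x) = if x = 0 then q / t ^ 2 else 0) ↔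
      (Fintype.card G * α + 1) ^ 2 = q := by
  set N : ℚ := (Fintype.card G : ℚ)
  have hsum' (x : G) : ∑ a, (α - t * e (a - x)) = -1 :=
    (Fintype.sum_equiv (Equiv.subRight x) _ _ fun _ => rfl).trans hsum
  have key (x : G) : t ^ 2 * ∑ a, e a * e (a - x) =
      (N * α ^ 2 + 2 * α - M) + if x = 0 then q else 0 := by
    have hc := hcorr (-x)
    simp only [← sub_eq_add_neg, neg_eq_zero] at hc
    have hexp (a : G) : t ^ 2 * (e a * e (a - x)) = α ^ 2 - α * (α - t * e a) -
        α * (α - t * e (a - x)) + (α - t * e a) * (α - t * e (a - x)) := by ring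
    rw [mul_sum, sum_congr rfl fun a _ => hexp a, sum_add_distrib, sum_sub_distrib,
      sum_sub_distrib, ← mul_sum, ← mul_sum, hsum, hsum' x, hc, sum_const, card_univ,
      nsmul_eq_mul]
    ring
  have hN : N ≠ 0 := Nat.cast_ne_zero.2 Fintype.card_ne_zero
  constructor
  · intro h
    have h₀ := key g₀
    rw [h, if_neg hg₀, if_neg hg₀, mul_zero, add_zero] at h₀
    linear_combination N * h₀.symm - hq
  · intro h x
    have hC : N * α ^ 2 + 2 * α - M = 0 := by
      refine (mul_eq_zero.1 ?_).resolve_left hN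
      linear_combination h + hq
    have := key x
    rw [hC, zero_add] at this
    split_ifs at this ⊢
    · field_simp
      linear_combination this
    · simpa [ht] using this

end GroupRing

theorem stmt_4_general
    (p f N q : ℕ) [Fact p.Prime] (hq : q = p ^ f)
    (hN : 2 < N) [NeZero N] (hNq : N ∣ q - 1)
    (F : Type) [Field F] [Fintype F] [Algebra (ZMod p) F]
    (hcard : Fintype.card F = q)
    (γ : F) (hγ : orderOf γ = q - 1)
    (ζ : ℂ) (hζ : IsPrimitiveRoot ζ p)
    (ψ : F → ℂ) (hψ : ∀ x, ψ x = ζ ^ (Algebra.trace (ZMod p) F x).val)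
    (η : ℕ → ℂ)
    (hη : ∀ a, η a = ∑ j ∈ Finset.range ((q - 1) / N), ψ (γ ^ (a + N * j)))
    (α₁ α₂ α₃ : ℚ)
    (hval : {c : ℂ | ∃ a, a < N ∧ η a = c} = {(α₁ : ℂ), (α₂ : ℂ), (α₃ : ℂ)})
    (I₁ I₃ : Finset (ZMod N))
    (hI₁ : ∀ x : ZMod N, x ∈ I₁ ↔ η x.val = (α₁ : ℂ))
    (hI₃ : ∀ x : ZMod N, x ∈ I₃ ↔ η x.val = (α₃ : ℂ))
    (t : ℕ) (ht : 0 < t)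
    (hα12 : α₁ - α₂ = -(t : ℚ)) (hα32 : α₃ - α₂ = (t : ℚ)) :
    ((∑ a ∈ I₁, AddMonoidAlgebra.single a (1 : ℚ))
          - (∑ a ∈ I₃, AddMonoidAlgebra.single a (1 : ℚ)))
      * ((∑ a ∈ I₁, AddMonoidAlgebra.single (-a) (1 : ℚ))
          - (∑ a ∈ I₃, AddMonoidAlgebra.single (-a) (1 : ℚ)))
      = ((q : ℚ) / (t : ℚ) ^ 2) • (1 : AddMonoidAlgebra ℚ (ZMod N))
    ↔ ∃ m : ℕ, q = m ^ 2 ∧ α₂ = ((m : ℚ) - 1) / N := by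
  classical
  subst hcard
  have : CharP F p := charP_of_injective_algebraMap (algebraMap (ZMod p) F).injective p
  have : Fact (1 < N) := ⟨by omega⟩
  obtain ⟨χ, hχ, rfl⟩ : ∃ χ : AddChar F ℂ, χ ≠ 1 ∧ ψ = χ := ⟨_, traceChar_ne_one hζ,
    funext fun x => (hψ x).trans (traceChar_apply _ x).symm⟩
  obtain ⟨M, hM⟩ := hNq
  rw [hM, Nat.mul_div_cancel_left M (by omega)] at hη
  obtain rfl : η = gaussPeriod χ γ N M := funext hη
  have hF : Fintype.card F = N * M + 1 := by have := Fintype.one_lt_card (α := F); omega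
  have hγM : IsPrimitiveRoot γ (N * M) := IsPrimitiveRoot.iff_orderOf.2 (hγ.trans hM)
  have hvals (c : ℂ) :
      (∃ a, a < N ∧ gaussPeriod χ γ N M a = c) ↔ c = α₁ ∨ c = α₂ ∨ c = α₃ :=
    Set.ext_iff.1 hval c
  have he := ratCast_sub_mul_indicatorDiff_eq (fun x : ZMod N => gaussPeriod χ γ N M x.val)
    (by exact_mod_cast ht) hα12 hα32 (fun x => (hvals _).1 ⟨x.val, x.val_lt, rfl⟩) hI₁ hI₃
  rw [sub_mul_sub_eq_smul_one_iff, sum_mul_sub_eq_ite_iff _ (by positivity)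
    (by rw [ZMod.card, hF]; push_cast; ring)
    (sum_eq_neg_one_of_ratCast_eq_gaussPeriod hγM hF hχ he)
    (sum_mul_add_eq_of_ratCast_eq_gaussPeriod hγM hF hχ he) one_ne_zero, ZMod.card]
  obtain ⟨a₁, -, ha₁⟩ := (hvals α₁).2 (Or.inl rfl)
  obtain ⟨a₂, -, ha₂⟩ := (hvals α₂).2 (Or.inr (Or.inl rfl))
  exact natCast_mul_add_one_sq_eq_card_iff hγM hF hq ha₂ ha₁
    (by linarith [(Nat.cast_pos.2 ht : (0 : ℚ) < t)])

/-- Proposition 2.7 / `circu`.  If the Gauss periods of order `N` of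
`F_q` take exactly three rational values in arithmetic progression `α₂-t, α₂, α₂+t`
(`t > 0`), then `I₁ - I₃` generates a circulant weighing matrix `CW(N, q/t²)`, i.e.
`(I₁-I₃)(I₁-I₃)⁽⁻¹⁾ = (q/t²)·1` in `ℚ[Z_N]`, if and only if `q` is a square and
`α₂ = (√q - 1)/N`. -/
theorem stmt_4
    (p f N q : ℕ) [Fact p.Prime] (hf : 0 < f) (hq : q = p ^ f)
    (hN : 2 < N) [NeZero N] (hNq : N ∣ q - 1)
    (F : Type) [Field F] [Fintype F] [Algebra (ZMod p) F]
    (hcard : Fintype.card F = q)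
    (γ : F) (hγ : orderOf γ = q - 1)
    (ζ : ℂ) (hζ : IsPrimitiveRoot ζ p)
    (ψ : F → ℂ) (hψ : ∀ x, ψ x = ζ ^ (Algebra.trace (ZMod p) F x).val)
    (η : ℕ → ℂ)
    (hη : ∀ a, η a = ∑ j ∈ Finset.range ((q - 1) / N), ψ (γ ^ (a + N * j)))
    (α₁ α₂ α₃ : ℚ)
    (h12 : α₁ ≠ α₂) (h13 : α₁ ≠ α₃) (h23 : α₂ ≠ α₃)
    (hval : {c : ℂ | ∃ a, a < N ∧ η a = c} = {(α₁ : ℂ), (α₂ : ℂ), (α₃ : ℂ)})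
    (I₁ I₂ I₃ : Finset (ZMod N))
    (hI₁ : ∀ x : ZMod N, x ∈ I₁ ↔ η x.val = (α₁ : ℂ))
    (hI₂ : ∀ x : ZMod N, x ∈ I₂ ↔ η x.val = (α₂ : ℂ))
    (hI₃ : ∀ x : ZMod N, x ∈ I₃ ↔ η x.val = (α₃ : ℂ))
    (t : ℕ) (ht : 0 < t)
    (hα12 : α₁ - α₂ = -(t : ℚ)) (hα32 : α₃ - α₂ = (t : ℚ)) :
    ((∑ a ∈ I₁, AddMonoidAlgebra.single a (1 : ℚ))
          - (∑ a ∈ I₃, AddMonoidAlgebra.single a (1 : ℚ)))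
      * ((∑ a ∈ I₁, AddMonoidAlgebra.single (-a) (1 : ℚ))
          - (∑ a ∈ I₃, AddMonoidAlgebra.single (-a) (1 : ℚ)))
      = ((q : ℚ) / (t : ℚ) ^ 2) • (1 : AddMonoidAlgebra ℚ (ZMod N))
    ↔ ∃ m : ℕ, q = m ^ 2 ∧ α₂ = ((m : ℚ) - 1) / N :=
  stmt_4_general p f N q hq hN hNq F hcard γ hγ ζ hζ ψ hψ η hη α₁ α₂ α₃ hval I₁ I₃ hI₁ hI₃ t ht hα12
    hα32
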